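/- arXiv:1112.0118 — 4 statements merged into one kernel-verified Lean document; each statement's English description precedes it below -/
import Mathlib

section
/- For every integer ℓ ≥ 0 and every w ∈ 𝔡_1, one has Φ_ℓ(z_1 w) = Σ_{j=0}^{ℓ} (−ξ_1)^{ℓ−j} z_1 Φ_j(w). -/
open scoped BigOperators

noncomputable section

attribute [local instance 10] Classical.propDecidable

/-- The `q`-integer `[n] = (1 - q^n)/(1 - q)`. -/
def qint (q : ℝ) (n : ℕ) : ℝ := (1 - q ^ n) / (1 - q)

/-- `I(r,n)`: multi-indices of positive integers of depth `r` and weight `n`. -/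
def Ifin (r n : ℕ) : Finset (Fin r → ℕ) :=
  (Fintype.piFinset fun _ : Fin r => Finset.Icc 1 n).filter fun c => (∑ i, c i) = n

/-- `I₀(r,n)`: admissible multi-indices (first entry at least 2). -/
def I0fin (r n : ℕ) : Finset (Fin r → ℕ) :=
  (Ifin r n).filter fun c => ∀ h : 0 < r, 2 ≤ c ⟨0, h⟩

/-- The `q`-analogue of the multiple zeta value,
`ζ_q(α) = Σ_{m_1 > ... > m_r > 0} Π_j q^{(α_j - 1) m_j}/[m_j]^{α_j}`. -/
def zetaQ (q : ℝ) {r : ℕ} (α : Fin r → ℕ) : ℝ :=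
  ∑' m : {m : Fin r → ℕ // (∀ i j : Fin r, i < j → m j < m i) ∧ ∀ i, 0 < m i},
    ∏ j, q ^ ((α j - 1) * m.1 j) / qint q (m.1 j) ^ α j

/-- `K_{b,n}(M) = Σ_{α ∈ I₀(b,n)} Σ_{m_1 > ... > m_{b-1} > m_b = M} Π_j q^{(α_j-1)m_j}/[m_j]^{α_j}`. -/
def Kfun (q : ℝ) (b n M : ℕ) : ℝ :=
  ∑ α ∈ I0fin b n,
    ∑' m : {m : Fin b → ℕ //
        (∀ i j : Fin b, i < j → m j < m i) ∧
          ∀ h : 0 < b, m ⟨b - 1, Nat.sub_lt h Nat.one_pos⟩ = M},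
      ∏ j, q ^ ((α j - 1) * m.1 j) / qint q (m.1 j) ^ α j

/-- `f_ℓ(N,M) = Σ_{N = k_1 > k_2 > ... > k_ℓ > M} (q^{k_1-M}/[k_1-M]) Π_{j=2}^{ℓ} 1/[k_j-M]`. -/
def fS (q : ℝ) (l N M : ℕ) : ℝ :=
  ∑ k ∈ (Fintype.piFinset fun _ : Fin l => Finset.Ioc M N).filter
      (fun k => (∀ i j : Fin l, i < j → k j < k i) ∧ ∀ h : 0 < l, k ⟨0, h⟩ = N),
    ∏ j : Fin l, (if (j : ℕ) = 0 then q ^ (k j - M) else 1) / qint q (k j - M)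

/-- `g_{ℓ,β}(M) = Σ_{M = m_1 ≥ m_2 ≥ ... ≥ m_ℓ ≥ 1} (q^{(β-1)m_1}/[m_1]^β) Π_{j=2}^{ℓ} q^{m_j}/[m_j]`. -/
def gS (q : ℝ) (l β M : ℕ) : ℝ :=
  ∑ m ∈ (Fintype.piFinset fun _ : Fin l => Finset.Icc 1 M).filter
      (fun m => (∀ i j : Fin l, i ≤ j → m j ≤ m i) ∧ ∀ h : 0 < l, m ⟨0, h⟩ = M),
    ∏ j : Fin l, if (j : ℕ) = 0 then q ^ ((β - 1) * m j) / qint q (m j) ^ β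
      else q ^ m j / qint q (m j)

/-- `h_{r,ℓ}(N_1,...,N_r,M) = Σ_{c ∈ I(r,ℓ)} (Π_{j=1}^{r-1} f_{c_j}(N_j,N_{j+1})) f_{c_r}(N_r,M)`. -/
def hS (q : ℝ) (r l : ℕ) (N : Fin r → ℕ) (M : ℕ) : ℝ :=
  ∑ c ∈ Ifin r l,
    ∏ j : Fin r, fS q (c j) (N j) (if h : (j : ℕ) + 1 < r then N ⟨(j : ℕ) + 1, h⟩ else M)

/-- `p(n_1,...,n_s;m) = (q^{n_1-m}/[n_1-m]) Π_{j=2}^{s} 1/[n_j-m]`, with `p(∅;m) = 1`. -/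
def pS (q : ℝ) {s : ℕ} (n : Fin s → ℕ) (m : ℕ) : ℝ :=
  ∏ j : Fin s, (if (j : ℕ) = 0 then q ^ (n j - m) else 1) / qint q (n j - m)

/-! ### The algebras 𝔡, 𝔡_ξ and 𝔡₁ -/

/-- The alphabet `S = {z_k}_{k ≥ 1} ∪ {ξ_k}_{k ≥ 1}`: `Sum.inl k = z_k`, `Sum.inr k = ξ_k`. -/
abbrev Letter : Type := ℕ+ ⊕ ℕ+

/-- The noncommutative polynomial algebra 𝔡 over ℤ freely generated by `S`. -/
abbrev Dfree : Type := MonoidAlgebra ℤ (FreeMonoid Letter)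

/-- The subalgebra 𝔡_ξ generated by the `ξ_k`, realized as a free algebra on `{ξ_k}_{k≥1}`. -/
abbrev DXi : Type := MonoidAlgebra ℤ (FreeMonoid ℕ+)

/-- The subalgebra 𝔡₁ generated by `z_1` and `ξ_1`, realized as a free algebra on two letters
(`false = z_1`, `true = ξ_1`). -/
abbrev DOne : Type := MonoidAlgebra ℤ (FreeMonoid Bool)

/-- The generator `z_k` of 𝔡. -/
def zL (k : ℕ+) : Dfree := MonoidAlgebra.single (FreeMonoid.of (Sum.inl k)) 1

/-- The generator `ξ_k` of 𝔡. -/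
def xiL (k : ℕ+) : Dfree := MonoidAlgebra.single (FreeMonoid.of (Sum.inr k)) 1

/-- The generator `ξ_k` of 𝔡_ξ. -/
def xiX (k : ℕ+) : DXi := MonoidAlgebra.single (FreeMonoid.of k) 1

/-- The generator `z_1` of 𝔡₁. -/
def zO : DOne := MonoidAlgebra.single (FreeMonoid.of false) 1

/-- The generator `ξ_1` of 𝔡₁. -/
def xiO : DOne := MonoidAlgebra.single (FreeMonoid.of true) 1

/-- `z_k` for a natural number index `k ≥ 1` (junk value `0` for `k = 0`). -/
def zOf (k : ℕ) : Dfree := if h : 0 < k then zL ⟨k, h⟩ else 0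

/-- `ξ_k ∈ 𝔡_ξ` for a natural number index `k ≥ 1` (junk value `0` for `k = 0`). -/
def xiOf (k : ℕ) : DXi := if h : 0 < k then xiX ⟨k, h⟩ else 0

/-- The canonical embedding `𝔡_ξ ↪ 𝔡`. -/
def toD (v : DXi) : Dfree := MonoidAlgebra.ofCoeff (Finsupp.mapDomain (FreeMonoid.map Sum.inr) v.coeff)

/-- The canonical embedding `𝔡₁ ↪ 𝔡` (`false ↦ z_1`, `true ↦ ξ_1`). -/
def toD1 (w : DOne) : Dfree :=
  MonoidAlgebra.ofCoeff (Finsupp.mapDomain (FreeMonoid.map fun b => if b then Sum.inr 1 else Sum.inl 1) w.coeff)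

/-- `J_{z_k}(m) = q^{(k-1)m}/[m]^k` and `J_{ξ_k}(m) = q^{km}/[m]^k`. -/
def Jlet (q : ℝ) : Letter → ℕ → ℝ
  | Sum.inl k, m => q ^ (((k : ℕ) - 1) * m) / qint q m ^ (k : ℕ)
  | Sum.inr k, m => q ^ ((k : ℕ) * m) / qint q m ^ (k : ℕ)

/-- `A_w(M) = Σ_{M > m_1 > ... > m_r > 0} J_{u_1}(m_1) ⋯ J_{u_r}(m_r)` for a word `w = u_1 ⋯ u_r`. -/
def AW (q : ℝ) (w : List Letter) (M : ℕ) : ℝ :=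
  ∑ m ∈ (Fintype.piFinset fun _ : Fin w.length => Finset.Ioo 0 M).filter
      (fun m => ∀ i j, i < j → m j < m i),
    ∏ j, Jlet q (w.get j) (m j)

/-- `A*_w(M) = Σ_{M > m_1 ≥ ... ≥ m_r ≥ 1} J_{u_1}(m_1) ⋯ J_{u_r}(m_r)` for a word `w = u_1 ⋯ u_r`. -/
def AstarW (q : ℝ) (w : List Letter) (M : ℕ) : ℝ :=
  ∑ m ∈ (Fintype.piFinset fun _ : Fin w.length => Finset.Ioo 0 M).filter
      (fun m => ∀ i j, i ≤ j → m j ≤ m i),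
    ∏ j, Jlet q (w.get j) (m j)

/-- The ℤ-linear extension `A(M) : 𝔡 → ℝ`. -/
def Amap (q : ℝ) (x : Dfree) (M : ℕ) : ℝ :=
  Finsupp.sum x.coeff fun w a => (a : ℝ) * AW q (FreeMonoid.toList w) M

/-- The ℤ-linear extension `A*(M) : 𝔡 → ℝ`. -/
def Astarmap (q : ℝ) (x : Dfree) (M : ℕ) : ℝ :=
  Finsupp.sum x.coeff fun w a => (a : ℝ) * AstarW q (FreeMonoid.toList w) M

/-- The map `ρ` on words:  `ρ(1,w) = w`, `ρ(v,1) = v`,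
`ρ(ξ_k v, z_ℓ w) = ξ_k ρ(v, z_ℓ w) + z_ℓ ρ(ξ_k v, w) + z_{k+ℓ} ρ(v,w)`, and
`ρ(ξ_k v, ξ_ℓ w) = ξ_k ρ(v, ξ_ℓ w) + ξ_ℓ ρ(ξ_k v, w) + ξ_{k+ℓ} ρ(v,w)`. -/
def rhoW : List ℕ+ → List Letter → Dfree
  | [], w => MonoidAlgebra.single (FreeMonoid.ofList w) 1
  | k :: v, [] => MonoidAlgebra.single (FreeMonoid.ofList ((k :: v).map Sum.inr)) 1
  | k :: v, Sum.inl l :: w =>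
      xiL k * rhoW v (Sum.inl l :: w) + zL l * rhoW (k :: v) w + zL (k + l) * rhoW v w
  | k :: v, Sum.inr l :: w =>
      xiL k * rhoW v (Sum.inr l :: w) + xiL l * rhoW (k :: v) w + xiL (k + l) * rhoW v w
  termination_by v w => v.length + w.length

/-- The ℤ-bilinear map `ρ : 𝔡_ξ × 𝔡 → 𝔡`. -/
def rho (v : DXi) (x : Dfree) : Dfree :=
  Finsupp.sum v.coeff fun vw a =>
    Finsupp.sum x.coeff fun xw b => (a * b) • rhoW (FreeMonoid.toList vw) (FreeMonoid.toList xw)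

/-- `ξ_k ∘ ·` on words: `ξ_k ∘ 1 = 0` and `ξ_k ∘ (ξ_ℓ v) = ξ_{k+ℓ} v`. -/
def circW (k : ℕ+) : List ℕ+ → DXi
  | [] => 0
  | l :: v => MonoidAlgebra.single (FreeMonoid.ofList ((k + l) :: v)) 1

/-- The ℤ-linear map `ξ_k ∘ · : 𝔡_ξ → 𝔡_ξ`. -/
def circ (k : ℕ+) (x : DXi) : DXi :=
  Finsupp.sum x.coeff fun w a => a • circW k (FreeMonoid.toList w)

/-- The map `d` on words: `d(1) = 1` and `d(ξ_k v) = ξ_k d(v) + ξ_k ∘ d(v)`. -/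
def dW : List ℕ+ → DXi
  | [] => 1
  | k :: v => xiX k * dW v + circ k (dW v)

/-- The ℤ-linear map `d : 𝔡_ξ → 𝔡_ξ`. -/
def dmap (v : DXi) : DXi := Finsupp.sum v.coeff fun w a => a • dW (FreeMonoid.toList w)

/-- The maps `φ_s` on words of 𝔡₁: `φ_0 = id`, `φ_s(1) = ξ_1 z_1^{s-1}` for `s ≥ 1`,
`φ_s(z_1 w) = z_1 φ_s(w) + ξ_1 Σ_{i=1}^{s} z_1^i φ_{s-i}(w)`, and
`φ_s(ξ_1 w) = ξ_1 Σ_{i=0}^{s} z_1^i φ_{s-i}(w)`. -/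
def phiW : ℕ → List Bool → DOne
  | s, [] =>
      if s = 0 then 1
      else MonoidAlgebra.single (FreeMonoid.ofList (true :: List.replicate (s - 1) false)) 1
  | s, false :: w =>
      zO * phiW s w +
        ∑ i ∈ Finset.Icc 1 s, xiO * zO ^ i * phiW (s - i) w
  | s, true :: w =>
      ∑ i ∈ Finset.range (s + 1), xiO * zO ^ i * phiW (s - i) w
  termination_by _ w => w.length

/-- The ℤ-linear maps `φ_s : 𝔡₁ → 𝔡₁`. -/
def phi (s : ℕ) (x : DOne) : DOne := Finsupp.sum x.coeff fun w a => a • phiW s (FreeMonoid.toList w)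

/-- `Φ_0 = id` and `Φ_ℓ = Σ_{r=1}^{ℓ} (-1)^r Σ_{c ∈ I(r,ℓ)} φ_{c_1} ⋯ φ_{c_r}` for `ℓ ≥ 1`. -/
def PhiM : ℕ → DOne → DOne
  | 0 => id
  | l + 1 => fun x =>
      ∑ r ∈ Finset.Icc 1 (l + 1),
        (-1 : ℤ) ^ r •
          ∑ c ∈ Ifin r (l + 1), ((List.ofFn fun j : Fin r => phi (c j)).foldr (· ∘ ·) id) x

/-- `Z_s(w) = Σ_{ℓ=0}^{s} ρ(d(ξ_1^{s-ℓ}), Φ_ℓ(w))`. -/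
def Zmap (s : ℕ) (w : DOne) : Dfree :=
  ∑ l ∈ Finset.range (s + 1), rho (dmap (xiX 1 ^ (s - l))) (toD1 (PhiM l w))

/-! Write `(φ ⋆ v)_m = Σ_{i+j=m} φ_i(v_j)` for sequences `v` in 𝔡₁. Since `φ_0 = id`, the map
`v ↦ φ ⋆ v` is injective, and the definition of `Φ` says exactly that `φ ⋆ Φ_•(x) = δ_0 x`
(`Φ` is the inverse of `Σ φ_s t^s`). To get `Φ_n(z₁x) = z₁Φ_n(x) − ξ₁Φ_{n−1}(z₁x)` it therefore
suffices to check that the right-hand side also convolves to `δ_0 z₁x`. Split it as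
`(z₁ − ξ₁)Φ_n(x) + ξ₁(Φ_n(x) − Φ_{n−1}(z₁x))`: each `φ_s` commutes with left multiplication by
`z₁ − ξ₁`, and `φ_s(ξ₁y) = ξ₁ Σ_{i+j=s} z₁^i φ_j(y)` turns the convolution of the second summand
into `ξ₁ Σ_{i+j=m} z₁^i (δ_0 x − δ_1 z₁x)_j = δ_0 ξ₁x`. Unrolling that recursion in `n` gives the
closed formula. -/

open Finset

lemma sum_antidiagonal_antidiagonal {M : Type*} [AddCommMonoid M] (n : ℕ) (f : ℕ → ℕ → ℕ → M) :
    ∑ p ∈ antidiagonal n, ∑ q ∈ antidiagonal p.1, f q.1 q.2 p.2 =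
      ∑ p ∈ antidiagonal n, ∑ q ∈ antidiagonal p.2, f p.1 q.1 q.2 := by
  simp only [sum_sigma']
  refine sum_nbij' (fun ⟨⟨_, k⟩, ⟨i, j⟩⟩ => ⟨(i, j + k), (j, k)⟩)
    (fun ⟨⟨i, _⟩, ⟨j, k⟩⟩ => ⟨(i + j, k), (i, j)⟩) ?_ ?_ ?_ ?_ ?_ <;>
  aesop (add simp [add_assoc])

lemma sum_antidiagonal_ite_snd_eq {M : Type*} [AddCommMonoid M] (m k : ℕ) (g : ℕ × ℕ → M) :
    ∑ p ∈ antidiagonal m, (if p.2 = k then g p else 0) = if k ≤ m then g (m - k, k) else 0 := by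
  rw [← sum_filter]
  erw [HasAntidiagonal.filter_snd_eq_antidiagonal]
  split_ifs <;> simp

lemma mem_Ifin {r n : ℕ} {c : Fin r → ℕ} : c ∈ Ifin r n ↔ (∀ i, 1 ≤ c i) ∧ ∑ i, c i = n := by
  simp only [Ifin, mem_filter, Fintype.mem_piFinset, mem_Icc]
  refine ⟨fun ⟨h1, h2⟩ => ⟨fun i => (h1 i).1, h2⟩, fun ⟨h1, h2⟩ => ⟨fun i => ⟨h1 i, ?_⟩, h2⟩⟩
  exact h2 ▸ single_le_sum (fun j _ => Nat.zero_le (c j)) (mem_univ i)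

lemma Ifin_eq_empty_of_lt {r n : ℕ} (h : n < r) : Ifin r n = ∅ := by
  refine eq_empty_iff_forall_notMem.mpr fun c hc => ?_
  obtain ⟨h1, h2⟩ := mem_Ifin.mp hc
  have : r ≤ n := calc
    r = ∑ _i : Fin r, 1 := by simp
    _ ≤ ∑ i, c i := sum_le_sum fun i _ => h1 i
    _ = n := h2
  omega

lemma Ifin_zero_left {n : ℕ} : Ifin 0 n = if n = 0 then univ else ∅ := by
  ext c
  rw [mem_Ifin]
  split_ifs with h
  · simp only [h, mem_univ, iff_true]
    exact ⟨finZeroElim, by simp⟩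
  · simp [Ne.symm h]

lemma sum_Ifin_succ {M : Type*} [AddCommMonoid M] (r n : ℕ) (g : (Fin (r + 1) → ℕ) → M) :
    ∑ c ∈ Ifin (r + 1) (n + 1), g c =
      ∑ p ∈ antidiagonal n, ∑ c ∈ Ifin r p.2, g (Fin.cons (p.1 + 1) c) := by
  have cons_tail : ∀ c ∈ Ifin (r + 1) (n + 1),
      (Fin.cons (c 0 - 1 + 1) (Fin.tail c) : Fin (r + 1) → ℕ) = c :=
    fun c hc => by rw [Nat.sub_add_cancel ((mem_Ifin.mp hc).1 0), Fin.cons_self_tail]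
  rw [sum_sigma']
  refine sum_nbij' (fun c => ⟨(c 0 - 1, n + 1 - c 0), Fin.tail c⟩)
    (fun p => Fin.cons (p.1.1 + 1) p.2) ?_ ?_ cons_tail ?_ fun c hc => by rw [cons_tail c hc]
  · intro c hc
    obtain ⟨h1, h2⟩ := mem_Ifin.mp hc
    rw [Fin.sum_univ_succ] at h2
    have := h1 0
    simp only [mem_sigma, HasAntidiagonal.mem_antidiagonal, mem_Ifin]
    exact ⟨by omega, fun i => h1 i.succ, by simp only [Fin.tail]; omega⟩
  · rintro ⟨⟨i, k⟩, c⟩ hp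
    simp only [mem_sigma, HasAntidiagonal.mem_antidiagonal, mem_Ifin] at hp
    obtain ⟨hik, h1, h2⟩ := hp
    refine mem_Ifin.mpr ⟨Fin.cases (by simp) (by simpa using h1), ?_⟩
    rw [Fin.sum_cons, h2]
    dsimp only
    omega
  · rintro ⟨⟨i, k⟩, c⟩ hp
    simp only [mem_sigma, HasAntidiagonal.mem_antidiagonal] at hp
    simp only [Fin.cons_zero, Fin.tail_cons, Nat.add_sub_cancel]
    rw [show n + 1 - (i + 1) = k by omega]

lemma phi_add (s : ℕ) (x y : DOne) : phi s (x + y) = phi s x + phi s y := by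
  unfold phi
  rw [MonoidAlgebra.coeff_add]
  exact Finsupp.sum_add_index' (fun _ => by simp) (fun _ _ _ => add_smul _ _ _)

def phiAddHom (s : ℕ) : DOne →+ DOne := AddMonoidHom.mk' (phi s) (phi_add s)

@[simp]
lemma phi_zero_right (s : ℕ) : phi s 0 = 0 := map_zero (phiAddHom s)

lemma phi_sub (s : ℕ) (x y : DOne) : phi s (x - y) = phi s x - phi s y := map_sub (phiAddHom s) x y

lemma phi_zsmul (s : ℕ) (n : ℤ) (x : DOne) : phi s (n • x) = n • phi s x :=
  map_zsmul (phiAddHom s) n x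

lemma phi_sum {ι : Type*} (s : ℕ) (t : Finset ι) (f : ι → DOne) :
    phi s (∑ i ∈ t, f i) = ∑ i ∈ t, phi s (f i) :=
  map_sum (phiAddHom s) f t

lemma phi_single (s : ℕ) (w : FreeMonoid Bool) (a : ℤ) :
    phi s (MonoidAlgebra.single w a) = a • phiW s (FreeMonoid.toList w) := by
  unfold phi
  rw [MonoidAlgebra.coeff_single]
  exact Finsupp.sum_single_index (by simp)

lemma phiW_zero (w : List Bool) : phiW 0 w = MonoidAlgebra.single (FreeMonoid.ofList w) 1 := by
  induction w with
  | nil => simp [phiW, MonoidAlgebra.one_def]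
  | cons b w ih => cases b <;> simp [phiW, ih, zO, xiO, MonoidAlgebra.single_mul_single]

@[simp]
lemma phi_zero_left (x : DOne) : phi 0 x = x := by
  induction x using MonoidAlgebra.induction_linear with
  | zero => exact phi_zero_right 0
  | add x y hx hy => rw [phi_add, hx, hy]
  | single w a => simp [phi_single, phiW_zero, MonoidAlgebra.smul_single]

lemma zO_mul_single (w : FreeMonoid Bool) (a : ℤ) :
    zO * MonoidAlgebra.single w a = MonoidAlgebra.single (FreeMonoid.of false * w) a := by
  rw [zO, MonoidAlgebra.single_mul_single, one_mul]

lemma xiO_mul_single (w : FreeMonoid Bool) (a : ℤ) :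
    xiO * MonoidAlgebra.single w a = MonoidAlgebra.single (FreeMonoid.of true * w) a := by
  rw [xiO, MonoidAlgebra.single_mul_single, one_mul]

lemma phi_xi_mul (s : ℕ) (x : DOne) :
    phi s (xiO * x) = xiO * ∑ p ∈ antidiagonal s, zO ^ p.1 * phi p.2 x := by
  induction x using MonoidAlgebra.induction_linear with
  | zero => simp
  | add x y hx hy => simp only [mul_add, phi_add, hx, hy, sum_add_distrib]
  | single w a =>
    rw [xiO_mul_single, phi_single, FreeMonoid.toList_mul, FreeMonoid.toList_of,
      List.singleton_append, phiW, Nat.sum_antidiagonal_eq_sum_range_succ_mk, smul_sum, mul_sum]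
    refine sum_congr rfl fun i _ => ?_
    rw [phi_single, mul_smul_comm, mul_smul_comm, mul_assoc]

lemma phi_z_sub_xi_mul (s : ℕ) (x : DOne) :
    phi s ((zO - xiO) * x) = (zO - xiO) * phi s x := by
  induction x using MonoidAlgebra.induction_linear with
  | zero => simp
  | add x y hx hy => simp only [mul_add, phi_add, hx, hy]
  | single w a =>
    rw [sub_mul, zO_mul_single, xiO_mul_single, phi_sub, phi_single, phi_single]
    simp only [FreeMonoid.toList_mul, FreeMonoid.toList_of, List.singleton_append]
    rw [phiW, phiW, range_eq_Ico, sum_eq_sum_Ico_succ_bot (Nat.succ_pos s), zero_add,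
      Nat.succ_eq_add_one, Ico_add_one_right_eq_Icc, phi_single, pow_zero, mul_one, Nat.sub_zero]
    rw [smul_add, smul_add, mul_smul_comm, sub_mul, smul_sub]
    abel

def phiComp {r : ℕ} (c : Fin r → ℕ) : DOne → DOne :=
  (List.ofFn fun j => phi (c j)).foldr (· ∘ ·) id

lemma phiComp_cons {r : ℕ} (s : ℕ) (c : Fin r → ℕ) (x : DOne) :
    phiComp (Fin.cons s c : Fin (r + 1) → ℕ) x = phi s (phiComp c x) := by
  simp [phiComp, List.ofFn_succ]

lemma PhiM_eq_sum_range {m N : ℕ} (hm : m ≤ N) (x : DOne) :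
    PhiM m x = ∑ r ∈ range (N + 1), (-1 : ℤ) ^ r • ∑ c ∈ Ifin r m, phiComp c x := by
  cases m with
  | zero =>
    rw [sum_eq_single_of_mem 0 (mem_range.mpr N.succ_pos)]
    · simp [Ifin_zero_left, phiComp, PhiM]
    · intro r _ hr
      rw [Ifin_eq_empty_of_lt (Nat.pos_of_ne_zero hr), sum_empty, smul_zero]
  | succ m =>
    refine sum_subset (fun r hr => ?_) (fun r _ hr => ?_)
    · simp only [mem_Icc, mem_range] at hr ⊢
      omega
    · have : Ifin r (m + 1) = ∅ := by
        rcases Nat.eq_zero_or_pos r with rfl | hr0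
        · simp [Ifin_zero_left]
        · exact Ifin_eq_empty_of_lt (by simp only [mem_Icc] at hr; omega)
      rw [this, sum_empty, smul_zero]

lemma PhiM_succ (l : ℕ) (x : DOne) :
    PhiM (l + 1) x = -∑ p ∈ antidiagonal l, phi (p.1 + 1) (PhiM p.2 x) := by
  have expand : ∀ p ∈ antidiagonal l, phi (p.1 + 1) (PhiM p.2 x) =
      ∑ r ∈ range (l + 1), (-1 : ℤ) ^ r • ∑ c ∈ Ifin r p.2, phi (p.1 + 1) (phiComp c x) := by
    intro p hp
    simp only [PhiM_eq_sum_range (Finset.HasAntidiagonal.antidiagonal.snd_le hp), phi_sum,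
      phi_zsmul]
  rw [sum_congr rfl expand, sum_comm, ← sum_neg_distrib, PhiM_eq_sum_range le_rfl, sum_range_succ',
    Ifin_zero_left, if_neg l.succ_ne_zero, sum_empty, smul_zero, add_zero]
  refine sum_congr rfl fun r _ => ?_
  rw [sum_Ifin_succ, pow_succ, mul_neg_one, neg_smul, smul_sum]
  simp only [phiComp_cons]

def phiConv (v : ℕ → DOne) (m : ℕ) : DOne :=
  ∑ p ∈ antidiagonal m, phi p.1 (v p.2)

lemma phiConv_zero (v : ℕ → DOne) : phiConv v 0 = v 0 := by
  simp [phiConv]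

lemma phiConv_succ (v : ℕ → DOne) (m : ℕ) :
    phiConv v (m + 1) = v (m + 1) + ∑ p ∈ antidiagonal m, phi (p.1 + 1) (v p.2) := by
  rw [phiConv, Nat.sum_antidiagonal_succ, phi_zero_left]

lemma phiConv_add (u v : ℕ → DOne) (m : ℕ) :
    phiConv (fun n => u n + v n) m = phiConv u m + phiConv v m := by
  simp only [phiConv, phi_add, sum_add_distrib]

lemma phiConv_sub (u v : ℕ → DOne) (m : ℕ) :
    phiConv (fun n => u n - v n) m = phiConv u m - phiConv v m := by
  simp only [phiConv, phi_sub, sum_sub_distrib]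

lemma phiConv_injective : Function.Injective phiConv := by
  intro u v huv
  funext m
  induction m using Nat.strong_induction_on with
  | _ m ih =>
    cases m with
    | zero => simpa only [phiConv_zero] using congrFun huv 0
    | succ m =>
      have h := congrFun huv (m + 1)
      rw [phiConv_succ, phiConv_succ] at h
      have tail : ∑ p ∈ antidiagonal m, phi (p.1 + 1) (u p.2) =
          ∑ p ∈ antidiagonal m, phi (p.1 + 1) (v p.2) :=
        sum_congr rfl fun p hp => by
          rw [ih p.2 (Nat.lt_succ_of_le (Finset.HasAntidiagonal.antidiagonal.snd_le hp))]
      rwa [tail, add_left_inj] at h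

lemma phiConv_PhiM (x : DOne) (m : ℕ) :
    phiConv (fun n => PhiM n x) m = if m = 0 then x else 0 := by
  cases m with
  | zero => exact phiConv_zero _
  | succ m => rw [phiConv_succ, PhiM_succ, neg_add_cancel, if_neg m.succ_ne_zero]

lemma phiConv_z_sub_xi_mul (v : ℕ → DOne) (m : ℕ) :
    phiConv (fun n => (zO - xiO) * v n) m = (zO - xiO) * phiConv v m := by
  simp only [phiConv, phi_z_sub_xi_mul, mul_sum]

lemma phiConv_xi_mul (v : ℕ → DOne) (m : ℕ) :
    phiConv (fun n => xiO * v n) m = xiO * ∑ p ∈ antidiagonal m, zO ^ p.1 * phiConv v p.2 := by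
  simp only [phiConv, phi_xi_mul, mul_sum]
  exact sum_antidiagonal_antidiagonal m fun i j k => xiO * (zO ^ i * phi j (v k))

def PhiMzShift (x : DOne) : ℕ → DOne
  | 0 => 0
  | m + 1 => PhiM m (zO * x)

lemma phiConv_PhiMzShift (x : DOne) (m : ℕ) :
    phiConv (PhiMzShift x) m = if m = 1 then zO * x else 0 := by
  cases m with
  | zero => simp [phiConv_zero, PhiMzShift]
  | succ m =>
    rw [phiConv, Nat.sum_antidiagonal_succ', PhiMzShift, phi_zero_right, zero_add]
    exact (phiConv_PhiM (zO * x) m).trans (by simp)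

lemma sum_zO_pow_mul_phiConv_PhiM_sub_PhiMzShift (x : DOne) (m : ℕ) :
    ∑ p ∈ antidiagonal m, zO ^ p.1 * phiConv (fun n => PhiM n x - PhiMzShift x n) p.2 =
      if m = 0 then x else 0 := by
  simp only [phiConv_sub, phiConv_PhiM, phiConv_PhiMzShift, mul_sub, mul_ite, mul_zero,
    sum_sub_distrib]
  rw [sum_antidiagonal_ite_snd_eq, sum_antidiagonal_ite_snd_eq]
  cases m with
  | zero => simp
  | succ m => simp [pow_succ, mul_assoc]

lemma PhiM_z_mul (l : ℕ) (x : DOne) :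
    PhiM l (zO * x) = zO * PhiM l x - xiO * PhiMzShift x l := by
  have split : (fun n => zO * PhiM n x - xiO * PhiMzShift x n) =
      fun n => (zO - xiO) * PhiM n x + xiO * (PhiM n x - PhiMzShift x n) := by
    funext n
    noncomm_ring
  have h : (fun n => PhiM n (zO * x)) = fun n => zO * PhiM n x - xiO * PhiMzShift x n := by
    refine phiConv_injective (funext fun m => ?_)
    rw [split, phiConv_add, phiConv_z_sub_xi_mul, phiConv_xi_mul, phiConv_PhiM, phiConv_PhiM,
      sum_zO_pow_mul_phiConv_PhiM_sub_PhiMzShift]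
    split_ifs <;> noncomm_ring
  exact congrFun h l

/-- For every integer `ℓ ≥ 0` and every `w ∈ 𝔡₁`,
`Φ_ℓ(z_1 w) = Σ_{j=0}^{ℓ} (-ξ_1)^{ℓ-j} z_1 Φ_j(w)`. -/
theorem Phi_z_mul (l : ℕ) (w : DOne) :
    PhiM l (zO * w) = ∑ j ∈ Finset.range (l + 1), (-xiO) ^ (l - j) * zO * PhiM j w := by
  induction l with
  | zero => simp [PhiM]
  | succ l ih =>
    rw [PhiM_z_mul, PhiMzShift, ih, sum_range_succ _ (l + 1), Nat.sub_self, pow_zero, one_mul,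
      mul_sum, sub_eq_neg_add, ← sum_neg_distrib]
    congr 1
    refine sum_congr rfl fun j hj => ?_
    rw [Nat.sub_add_comm (mem_range_succ_iff.mp hj), pow_succ']
    simp only [neg_mul, mul_assoc]

end
end

section
/- For every integer k ≥ 0 and every w ∈ 𝔡_1, one has Σ_{ℓ=0}^{k} (−1)^ℓ ρ(d(ξ_1^{k−ℓ}), ξ_1^ℓ z_1 w) = Σ_{ℓ=0}^{k} z_{ℓ+1} ρ(d(ξ_1^{k−ℓ}), w). -/
open scoped BigOperators

noncomputable section

attribute [local instance 10] Classical.propDecidable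

/-! Write `D n = d(ξ_1^n)`. Unfolding `d` and `ξ_1 ∘ ·` gives `D (n+1) = Σ_{a ≤ n} ξ_{a+1} D (n-a)`,
and the defining recursion of `ρ` then expresses `ρ(D (n+1), y x)`, for any letter `y`, through the
`ρ(D (n-a), ·)`. Used with `y = ξ_1`, this makes the alternating sum over `ℓ` telescope, by
induction on `k`, for every letter `y` in place of `z_1` and every `x ∈ 𝔡`. -/

open MonoidAlgebra Finset

def Letter.gen (s : Letter) : Dfree := single (FreeMonoid.of s) 1

def Letter.shift (a : ℕ) : Letter → Letter :=
  Sum.map (fun i => ⟨a + i, by positivity⟩) (fun i => ⟨a + i, by positivity⟩)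

@[simp]
lemma Letter.shift_zero (s : Letter) : s.shift 0 = s := by
  cases s <;> exact congrArg _ (PNat.eq (zero_add _))

lemma rhoW_cons_cons (k : ℕ+) (v : List ℕ+) (s : Letter) (w : List Letter) :
    rhoW (k :: v) (s :: w) =
      xiL k * rhoW v (s :: w) + s.gen * rhoW (k :: v) w + (s.shift k).gen * rhoW v w := by
  cases s <;> rw [rhoW] <;> rfl

lemma xiX_mul_single (k : ℕ+) (v : List ℕ+) (c : ℤ) :
    xiX k * single (FreeMonoid.ofList v) c = single (FreeMonoid.ofList (k :: v)) c := by
  rw [xiX, single_mul_single, one_mul]; rfl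

lemma Letter.gen_mul_single (s : Letter) (w : List Letter) (c : ℤ) :
    s.gen * single (FreeMonoid.ofList w) c = single (FreeMonoid.ofList (s :: w)) c := by
  rw [Letter.gen, single_mul_single, one_mul]; rfl

lemma rho_single_single (v : List ℕ+) (w : List Letter) (a b : ℤ) :
    rho (single (FreeMonoid.ofList v) a) (single (FreeMonoid.ofList w) b) = (a * b) • rhoW v w := by
  rw [rho, coeff_single, coeff_single, Finsupp.sum_single_index (by simp),
    Finsupp.sum_single_index (by simp)]
  rfl

lemma rho_add_left (v v' : DXi) (x : Dfree) : rho (v + v') x = rho v x + rho v' x := by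
  unfold rho
  rw [coeff_add]
  exact Finsupp.sum_add_index' (fun _ => by simp)
    (fun _ _ _ => by simp [add_mul, add_smul, Finsupp.sum_add])

lemma rho_add_right (v : DXi) (x y : Dfree) : rho v (x + y) = rho v x + rho v y := by
  unfold rho
  rw [← Finsupp.sum_add]
  refine Finsupp.sum_congr fun _ _ => ?_
  rw [coeff_add]
  exact Finsupp.sum_add_index' (fun _ => by simp) (fun _ _ _ => by simp [mul_add, add_smul])

lemma rho_zero_left (x : Dfree) : rho 0 x = 0 := Finsupp.sum_zero_index

lemma rho_zero_right (v : DXi) : rho v 0 = 0 := by simp [rho]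

lemma rho_sum_left {ι : Type*} (s : Finset ι) (f : ι → DXi) (x : Dfree) :
    rho (∑ i ∈ s, f i) x = ∑ i ∈ s, rho (f i) x :=
  map_sum (AddMonoidHom.mk' (rho · x) (rho_add_left · · x)) f s

lemma rho_one_left (x : Dfree) : rho 1 x = x := by
  rw [rho, one_def, coeff_single, Finsupp.sum_single_index (by simp)]
  conv_rhs => rw [← sum_coeff_single x]
  refine Finsupp.sum_congr fun _ _ => ?_
  simp [rhoW]

lemma rho_xiX_mul_gen_mul (k : ℕ+) (s : Letter) (v : DXi) (x : Dfree) :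
    rho (xiX k * v) (s.gen * x) =
      xiL k * rho v (s.gen * x) + s.gen * rho (xiX k * v) x + (s.shift k).gen * rho v x := by
  induction v using MonoidAlgebra.induction_linear with
  | zero => simp [rho_zero_left]
  | add f g hf hg =>
    simp only [mul_add, rho_add_left, hf, hg]
    abel
  | single m c =>
    induction x using MonoidAlgebra.induction_linear with
    | zero => simp [rho_zero_right]
    | add f g hf hg =>
      simp only [mul_add, rho_add_right, hf, hg]
      abel
    | single m' b =>
      rw [← FreeMonoid.ofList_toList m, ← FreeMonoid.ofList_toList m', xiX_mul_single,
        Letter.gen_mul_single]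
      simp only [rho_single_single, rhoW_cons_cons, smul_add, mul_smul_comm]

lemma circ_add (k : ℕ+) (x y : DXi) : circ k (x + y) = circ k x + circ k y :=
  Finsupp.sum_add_index' (fun _ => by simp) (fun _ _ _ => add_smul _ _ _)

lemma circ_sum {ι : Type*} (k : ℕ+) (s : Finset ι) (f : ι → DXi) :
    circ k (∑ i ∈ s, f i) = ∑ i ∈ s, circ k (f i) :=
  map_sum (AddMonoidHom.mk' (circ k) (circ_add k)) f s

lemma circ_xiX_mul (k a : ℕ+) (v : DXi) : circ k (xiX a * v) = xiX (k + a) * v := by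
  induction v using MonoidAlgebra.induction_linear with
  | zero => simp [circ]
  | add f g hf hg => rw [mul_add, circ_add, hf, hg, mul_add]
  | single m c =>
    rw [← FreeMonoid.ofList_toList m, xiX_mul_single, xiX_mul_single, circ, coeff_single,
      Finsupp.sum_single_index (by simp)]
    simp [circW]

lemma circ_one (k : ℕ+) : circ k 1 = 0 := by
  rw [circ, one_def, coeff_single, Finsupp.sum_single_index (by simp)]
  exact smul_zero _

lemma dmap_xiX_one_pow (n : ℕ) : dmap (xiX 1 ^ n) = dW (List.replicate n 1) := by
  have hpow : xiX 1 ^ n = single (FreeMonoid.ofList (List.replicate n 1)) 1 := by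
    induction n with
    | zero => rfl
    | succ n ih => rw [pow_succ', ih, xiX_mul_single, List.replicate_succ]
  rw [hpow, dmap, coeff_single, Finsupp.sum_single_index (by simp), one_smul]
  rfl

lemma dmap_one : dmap 1 = 1 := by
  simpa [dW] using dmap_xiX_one_pow 0

lemma dmap_xiX_one_pow_succ (n : ℕ) :
    dmap (xiX 1 ^ (n + 1)) = xiX 1 * dmap (xiX 1 ^ n) + circ 1 (dmap (xiX 1 ^ n)) := by
  simp only [dmap_xiX_one_pow, List.replicate_succ, dW]

lemma dmap_xiX_one_pow_succ_eq_sum (m : ℕ) :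
    dmap (xiX 1 ^ (m + 1)) = ∑ a ∈ range (m + 1), xiX a.succPNat * dmap (xiX 1 ^ (m - a)) := by
  induction m with
  | zero =>
    rw [dmap_xiX_one_pow_succ, sum_range_one, Nat.sub_self, pow_zero, dmap_one, circ_one,
      add_zero]
    rfl
  | succ m ih =>
    rw [dmap_xiX_one_pow_succ (m + 1), sum_range_succ', add_comm]
    congr 1
    rw [ih, circ_sum]
    refine sum_congr rfl fun a _ => ?_
    rw [circ_xiX_mul, Nat.add_sub_add_right]
    congr 2
    exact PNat.eq (by rw [PNat.add_coe, Nat.succPNat_coe, Nat.succPNat_coe, PNat.one_coe]; omega)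

lemma rho_dmap_xiX_one_pow_succ_gen_mul (m : ℕ) (s : Letter) (x : Dfree) :
    rho (dmap (xiX 1 ^ (m + 1))) (s.gen * x) =
      ∑ a ∈ range (m + 1), xiL a.succPNat * rho (dmap (xiX 1 ^ (m - a))) (s.gen * x)
      + s.gen * rho (dmap (xiX 1 ^ (m + 1))) x
      + ∑ a ∈ range (m + 1), (s.shift (a + 1)).gen * rho (dmap (xiX 1 ^ (m - a))) x := by
  conv_lhs => rw [dmap_xiX_one_pow_succ_eq_sum, rho_sum_left]
  conv in s.gen * rho _ x => rw [dmap_xiX_one_pow_succ_eq_sum, rho_sum_left, mul_sum]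
  simp only [rho_xiX_mul_gen_mul, sum_add_distrib]
  rfl

lemma sum_neg_one_pow_smul_rho_xiL_pow_mul (k : ℕ) (s : Letter) (x : Dfree) :
    ∑ l ∈ range (k + 1), (-1 : ℤ) ^ l • rho (dmap (xiX 1 ^ (k - l))) (xiL 1 ^ l * (s.gen * x)) =
      ∑ a ∈ range (k + 1), (s.shift a).gen * rho (dmap (xiX 1 ^ (k - a))) x := by
  induction k generalizing s x with
  | zero => simp [dmap_one, rho_one_left]
  | succ k ih =>
    have hξ : ∀ a : ℕ, (Letter.shift a (.inr 1)).gen = xiL a.succPNat := fun _ => rfl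
    rw [sum_range_succ', sum_range_succ' _ (k + 1)]
    -- the terms `ℓ ≥ 1` form minus the same sum for the letter `ξ_1` in front of `s x`
    simp only [pow_succ, Nat.add_sub_add_right, mul_assoc, mul_neg_one, neg_smul, sum_neg_distrib]
    rw [show xiL 1 * (s.gen * x) = Letter.gen (.inr 1) * (s.gen * x) from rfl, ih]
    simp only [hξ, pow_zero, one_smul, one_mul, Nat.sub_zero, Letter.shift_zero]
    rw [rho_dmap_xiX_one_pow_succ_gen_mul]
    abel

/-- For every integer `k ≥ 0` and every `w ∈ 𝔡₁`,
`Σ_{ℓ=0}^{k} (-1)^ℓ ρ(d(ξ_1^{k-ℓ}), ξ_1^ℓ z_1 w) = Σ_{ℓ=0}^{k} z_{ℓ+1} ρ(d(ξ_1^{k-ℓ}), w)`. -/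
theorem rho_to_z (k : ℕ) (w : DOne) :
    (∑ l ∈ Finset.range (k + 1),
        (-1 : ℤ) ^ l • rho (dmap (xiX 1 ^ (k - l))) (xiL 1 ^ l * zL 1 * toD1 w)) =
      ∑ l ∈ Finset.range (k + 1), zOf (l + 1) * rho (dmap (xiX 1 ^ (k - l))) (toD1 w) := by
  have hz : ∀ a : ℕ, (Letter.shift a (.inl 1)).gen = zOf (a + 1) := fun a => by
    rw [zOf, dif_pos a.succ_pos]; rfl
  simp only [mul_assoc]
  exact (sum_neg_one_pow_smul_rho_xiL_pow_mul k (.inl 1) (toD1 w)).trans (by simp only [hz])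

end
end

section
/- For all positive integers m > n, one has Σ_{ℓ=1}^{∞} (q^{ℓ+m}/[ℓ+m]) · (1/[ℓ+n]) = (q^{m−n}/[m−n]) · Σ_{ℓ=1}^{m−n} q^{ℓ+n}/[ℓ+n], and in particular the series on the left converges. -/
open scoped BigOperators

noncomputable section

attribute [local instance 10] Classical.propDecidable

/-! Write `d = m - n` and `G k = q^k/[k]`. The partial-fraction identity
`q^(k+d)/[k+d] · 1/[k] = q^d/[d] · (G k - G (k+d))` makes the series telescope with shift `d`,
leaving `q^d/[d] · Σ_{l=1}^{d} G (l+n)`; convergence comes from `0 ≤ G k ≤ q^k`. -/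

theorem HasSum.sub_nat_add {G : Type*} [AddCommGroup G] [TopologicalSpace G]
    [IsTopologicalAddGroup G] {f : ℕ → G} {a : G} (hf : HasSum f a) (d : ℕ) :
    HasSum (fun i => f i - f (i + d)) (∑ i ∈ Finset.range d, f i) := by
  simpa using hf.sub ((hasSum_nat_add_iff' d).mpr hf)

lemma qint_eq_geom_sum {q : ℝ} (hq : q ≠ 1) (k : ℕ) : qint q k = ∑ i ∈ Finset.range k, q ^ i := by
  rw [geom_sum_eq hq, qint, ← neg_div_neg_eq, neg_sub, neg_sub]

lemma one_le_qint {q : ℝ} (hq0 : 0 ≤ q) (hq1 : q ≠ 1) {k : ℕ} (hk : 0 < k) : 1 ≤ qint q k := by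
  obtain ⟨j, rfl⟩ := Nat.exists_eq_add_of_lt hk
  rw [qint_eq_geom_sum hq1, Finset.sum_range_succ']
  simpa using Finset.sum_nonneg fun i _ => pow_nonneg hq0 (i + 1)

lemma summable_pow_div_qint {q : ℝ} (hq0 : 0 ≤ q) (hq1 : q < 1) :
    Summable fun k => q ^ k / qint q k := by
  refine (summable_geometric_of_lt_one hq0 hq1).of_nonneg_of_le
    (fun k => div_nonneg (pow_nonneg hq0 k) ?_) (fun k => ?_)
  · exact div_nonneg (sub_nonneg.2 (pow_le_one₀ hq0 hq1.le)) (sub_nonneg.2 hq1.le)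
  · rcases Nat.eq_zero_or_pos k with rfl | hk
    · simp [qint]
    · exact div_le_self (pow_nonneg hq0 k) (one_le_qint hq0 hq1.ne hk)

lemma pow_div_qint_mul_one_div_qint {q : ℝ} {k d : ℕ} (hk : qint q k ≠ 0) (hd : qint q d ≠ 0)
    (hkd : qint q (k + d) ≠ 0) :
    q ^ (k + d) / qint q (k + d) * (1 / qint q k) =
      q ^ d / qint q d * (q ^ k / qint q k - q ^ (k + d) / qint q (k + d)) := by
  have hq : 1 - q ≠ 0 := fun h => hk (by simp [qint, h])
  have hk' : 1 - q ^ k ≠ 0 := fun h => hk (by simp [qint, h])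
  have hd' : 1 - q ^ d ≠ 0 := fun h => hd (by simp [qint, h])
  have hkd' : 1 - q ^ (k + d) ≠ 0 := fun h => hkd (by simp [qint, h])
  simp only [qint]
  field_simp
  ring

theorem telescoping_sum_general (q : ℝ) (hq0 : 0 < q) (hq1 : q < 1)
    (m n : ℕ) (hnm : n < m) :
    Summable (fun l : ℕ+ =>
        q ^ ((l : ℕ) + m) / qint q ((l : ℕ) + m) * (1 / qint q ((l : ℕ) + n))) ∧
      (∑' l : ℕ+, q ^ ((l : ℕ) + m) / qint q ((l : ℕ) + m) * (1 / qint q ((l : ℕ) + n))) =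
        q ^ (m - n) / qint q (m - n) * ∑ l ∈ Finset.Icc 1 (m - n), q ^ (l + n) / qint q (l + n) := by
  obtain ⟨d, rfl⟩ := Nat.exists_eq_add_of_le hnm.le
  rw [Nat.add_sub_cancel_left]
  have hqint {k : ℕ} (hk : 0 < k) : qint q k ≠ 0 :=
    (zero_lt_one.trans_le (one_le_qint hq0.le hq1.ne hk)).ne'
  have hG : HasSum (fun i => q ^ (i + 1 + n) / qint q (i + 1 + n))
      (∑' i, q ^ (i + 1 + n) / qint q (i + 1 + n)) := by
    simpa only [← add_assoc] using
      ((summable_nat_add_iff (1 + n)).2 (summable_pow_div_qint hq0.le hq1)).hasSum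
  have hsum : HasSum
      (fun l : ℕ+ => q ^ ((l : ℕ) + (n + d)) / qint q ((l : ℕ) + (n + d)) *
        (1 / qint q ((l : ℕ) + n)))
      (q ^ d / qint q d * ∑ i ∈ Finset.range d, q ^ (i + 1 + n) / qint q (i + 1 + n)) := by
    refine hasSum_pnat_iff_hasSum_succ (f := fun k =>
      q ^ (k + (n + d)) / qint q (k + (n + d)) * (1 / qint q (k + n))) |>.2 ?_
    refine ((hG.sub_nat_add d).mul_left (q ^ d / qint q d)).congr_fun fun i => ?_
    rw [← add_assoc, pow_div_qint_mul_one_div_qint (hqint (by omega)) (hqint (by omega))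
      (hqint (by omega)), show i + d + 1 + n = i + 1 + n + d by omega]
  have hreindex : ∑ l ∈ Finset.Icc 1 d, q ^ (l + n) / qint q (l + n) =
      ∑ i ∈ Finset.range d, q ^ (i + 1 + n) / qint q (i + 1 + n) := by
    rw [← Finset.Ico_add_one_right_eq_Icc, Finset.sum_Ico_eq_sum_range, Nat.add_sub_cancel]
    simp only [add_comm 1]
  rw [hreindex]
  exact ⟨hsum.summable, hsum.tsum_eq⟩

/-- For all positive integers `m > n`,
`Σ_{ℓ=1}^{∞} (q^{ℓ+m}/[ℓ+m]) (1/[ℓ+n]) = (q^{m-n}/[m-n]) Σ_{ℓ=1}^{m-n} q^{ℓ+n}/[ℓ+n]`,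
and in particular the series on the left converges. -/
theorem telescoping_sum (q : ℝ) (hq0 : 0 < q) (hq1 : q < 1)
    (m n : ℕ) (hn : 0 < n) (hnm : n < m) :
    Summable (fun l : ℕ+ =>
        q ^ ((l : ℕ) + m) / qint q ((l : ℕ) + m) * (1 / qint q ((l : ℕ) + n))) ∧
      (∑' l : ℕ+, q ^ ((l : ℕ) + m) / qint q ((l : ℕ) + m) * (1 / qint q ((l : ℕ) + n))) =
        q ^ (m - n) / qint q (m - n) * ∑ l ∈ Finset.Icc 1 (m - n), q ^ (l + n) / qint q (l + n) :=
  telescoping_sum_general q hq0 hq1 m n hnm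
end
end

section
/- For every integer k ≥ 2 and all positive integers m_1 > m_2, one has Σ_{β∈I(2,k)} q^{(β_1−1)m_1+(β_2−1)m_2}/([m_1]^{β_1}[m_2]^{β_2}) = (q^{(k−2)m_2}/[m_2]^{k−1}) · (1/[m_1−m_2]) − (q^{(k−2)m_1}/[m_1]^{k−1}) · (q^{m_1−m_2}/[m_1−m_2]), where the sum is over all pairs (β_1,β_2) of positive integers with β_1+β_2 = k. -/
open scoped BigOperators

noncomputable section

attribute [local instance 10] Classical.propDecidable

/-! With `a = q^{m₁}/[m₁]` and `b = q^{m₂}/[m₂]` the summand of index `β` is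
`a^{β₁-1} b^{β₂-1}/([m₁][m₂])`, so the left side is the homogeneous geometric sum
`(a^{k-1} - b^{k-1})/((a - b)[m₁][m₂])`. The identity `q^{m₂}[m₁] - q^{m₁}[m₂] = q^{m₂}[m₁-m₂]`
turns the denominator `(b - a)[m₁][m₂]` into `q^{m₂}[m₁-m₂]`, which gives the right side. -/

lemma qint_pos {q : ℝ} (hq0 : 0 < q) (hq1 : q < 1) {n : ℕ} (hn : 0 < n) : 0 < qint q n :=
  div_pos (by linarith [pow_lt_one₀ hq0.le hq1 hn.ne']) (by linarith)

lemma pow_mul_qint_sub_pow_mul_qint (q : ℝ) {m₁ m₂ : ℕ} (hm : m₂ ≤ m₁) :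
    q ^ m₂ * qint q m₁ - q ^ m₁ * qint q m₂ = q ^ m₂ * qint q (m₁ - m₂) := by
  obtain ⟨d, rfl⟩ := Nat.exists_eq_add_of_le hm
  rw [Nat.add_sub_cancel_left]
  unfold qint
  ring

lemma pow_div_qint_sub_pow_div_qint {q : ℝ} {m₁ m₂ : ℕ} (hm : m₂ ≤ m₁) (h₁ : qint q m₁ ≠ 0)
    (h₂ : qint q m₂ ≠ 0) :
    q ^ m₂ / qint q m₂ - q ^ m₁ / qint q m₁ =
      q ^ m₂ * qint q (m₁ - m₂) / (qint q m₁ * qint q m₂) := by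
  rw [← pow_mul_qint_sub_pow_mul_qint q hm]
  field_simp

lemma sum_Ifin_two_add_two {M : Type*} [AddCommMonoid M] (n : ℕ) (f : (Fin 2 → ℕ) → M) :
    ∑ β ∈ Ifin 2 (n + 2), f β = ∑ i ∈ Finset.range (n + 1), f ![i + 1, n - i + 1] := by
  symm
  apply Finset.sum_nbij' (fun i => ![i + 1, n - i + 1]) (fun β => β 0 - 1)
  · intro i hi
    simp only [Finset.mem_range] at hi
    simp only [Ifin, Finset.mem_filter, Fintype.mem_piFinset, Finset.mem_Icc, Fin.forall_fin_two,
      Fin.sum_univ_two, Matrix.cons_val_zero, Matrix.cons_val_one]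
    omega
  · intro β hβ
    simp only [Ifin, Finset.mem_filter, Fintype.mem_piFinset, Finset.mem_Icc, Fin.forall_fin_two,
      Fin.sum_univ_two] at hβ
    simp only [Finset.mem_range]
    omega
  · intro i _
    simp
  · intro β hβ
    simp only [Ifin, Finset.mem_filter, Fintype.mem_piFinset, Finset.mem_Icc, Fin.forall_fin_two,
      Fin.sum_univ_two] at hβ
    ext j
    fin_cases j <;> simp <;> omega
  · intro i _
    rfl

lemma pow_add_div_pow_succ_mul_pow_succ {K : Type*} [Field K] (q A B : K) (i j m₁ m₂ : ℕ) :
    q ^ (i * m₁ + j * m₂) / (A ^ (i + 1) * B ^ (j + 1)) =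
      (q ^ m₁ / A) ^ i * (q ^ m₂ / B) ^ j / (A * B) := by
  rw [pow_add, mul_comm i, mul_comm j, pow_mul, pow_mul, div_pow, div_pow]
  ring

/-- For every integer `k ≥ 2` and all positive integers `m_1 > m_2`,
`Σ_{β ∈ I(2,k)} q^{(β_1-1)m_1+(β_2-1)m_2}/([m_1]^{β_1}[m_2]^{β_2})
  = (q^{(k-2)m_2}/[m_2]^{k-1}) (1/[m_1-m_2]) - (q^{(k-2)m_1}/[m_1]^{k-1}) (q^{m_1-m_2}/[m_1-m_2])`. -/
theorem partial_fraction (q : ℝ) (hq0 : 0 < q) (hq1 : q < 1)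
    (k : ℕ) (hk : 2 ≤ k) (m₁ m₂ : ℕ) (hm₂ : 0 < m₂) (hm : m₂ < m₁) :
    (∑ β ∈ Ifin 2 k,
        q ^ ((β 0 - 1) * m₁ + (β 1 - 1) * m₂) / (qint q m₁ ^ β 0 * qint q m₂ ^ β 1)) =
      q ^ ((k - 2) * m₂) / qint q m₂ ^ (k - 1) * (1 / qint q (m₁ - m₂)) -
        q ^ ((k - 2) * m₁) / qint q m₁ ^ (k - 1) * (q ^ (m₁ - m₂) / qint q (m₁ - m₂)) := by
  obtain ⟨n, rfl⟩ : ∃ n, k = n + 2 := ⟨k - 2, by omega⟩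
  have h₁ : qint q m₁ ≠ 0 := (qint_pos hq0 hq1 (hm₂.trans hm)).ne'
  have h₂ : qint q m₂ ≠ 0 := (qint_pos hq0 hq1 hm₂).ne'
  have hd : qint q (m₁ - m₂) ≠ 0 := (qint_pos hq0 hq1 (Nat.sub_pos_of_lt hm)).ne'
  have hba := pow_div_qint_sub_pow_div_qint hm.le h₁ h₂
  set a := q ^ m₁ / qint q m₁ with ha
  set b := q ^ m₂ / qint q m₂ with hb
  have hab : a ≠ b := by
    rw [ne_comm, ← sub_ne_zero, hba]
    exact div_ne_zero (mul_ne_zero (pow_ne_zero _ hq0.ne') hd) (mul_ne_zero h₁ h₂)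
  have hq : q ^ m₁ = q ^ (m₁ - m₂) * q ^ m₂ := by rw [← pow_add, Nat.sub_add_cancel hm.le]
  calc _ = ∑ i ∈ Finset.range (n + 1), a ^ i * b ^ (n + 1 - 1 - i) / (qint q m₁ * qint q m₂) := by
        rw [sum_Ifin_two_add_two]
        refine Finset.sum_congr rfl fun i _ => ?_
        simp [pow_add_div_pow_succ_mul_pow_succ, ha, hb]
    _ = (a ^ (n + 1) - b ^ (n + 1)) / (a - b) / (qint q m₁ * qint q m₂) := by
        rw [← Finset.sum_div, (Commute.all a b).geom_sum₂ hab]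
    _ = _ := by
        rw [← neg_sub b a, hba, ha, hb, Nat.add_sub_cancel, show n + 2 - 1 = n + 1 by omega,
          div_pow, div_pow, mul_comm n m₁, mul_comm n m₂, pow_mul, pow_mul, hq]
        field_simp
        ring

end
end
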